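/- Let n ≥ 4 and let O be a rotation orbit of triangulations of the n-gon with |O| ≥ 3. Then for any T ∈ O, the sequence T, r(T), r²(T), ..., r^{|O|-1}(T), T is a cycle in the Kneser graph KG(T_n); that is, consecutive terms are disjoint triangulations and the listed triangulations are pairwise distinct. In particular, for n ≥ 7 every rotation orbit induces a cycle in KG(T_n). -/

import Mathlib

/-- `x` lies strictly between `a` and `b` in the cyclic (clockwise) order on `ZMod n`. -/
def NgonBtw (n : ℕ) (a x b : ZMod n) : Prop :=
  0 < (x - a).val ∧ (x - a).val < (b - a).val

/-- Two unordered pairs of vertices of the `n`-gon cross: they have representations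
`{a,b}` and `{c,d}` with `c` strictly inside one open arc determined by `a, b`
and `d` strictly inside the other. -/
def NgonCross (n : ℕ) (e f : Sym2 (ZMod n)) : Prop :=
  ∃ a b c d : ZMod n, e = s(a, b) ∧ f = s(c, d) ∧
    NgonBtw n a c b ∧ NgonBtw n b d a

/-- A diagonal of the convex `n`-gon: an unordered pair `{i,j}` with
`i - j` not congruent to `0`, `1` or `-1` modulo `n`. -/
def IsDiagonal (n : ℕ) (e : Sym2 (ZMod n)) : Prop :=
  ∃ i j : ZMod n, e = s(i, j) ∧ i - j ≠ 0 ∧ i - j ≠ 1 ∧ i - j ≠ -1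

/-- A triangulation of the convex `n`-gon: a set of `n - 3` pairwise
noncrossing diagonals. -/
def IsTriangulation (n : ℕ) (T : Finset (Sym2 (ZMod n))) : Prop :=
  T.card = n - 3 ∧ (∀ e ∈ T, IsDiagonal n e) ∧
    ∀ e ∈ T, ∀ f ∈ T, ¬ NgonCross n e f

/-- Clockwise rotation of a diagonal: `{i,j} ↦ {i+1, j+1}`. -/
def rotDiag (n : ℕ) (e : Sym2 (ZMod n)) : Sym2 (ZMod n) :=
  e.map (· + 1)

/-- Inverse rotation of a diagonal: `{i,j} ↦ {i-1, j-1}`. -/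
def rotInvDiag (n : ℕ) (e : Sym2 (ZMod n)) : Sym2 (ZMod n) :=
  e.map (· - 1)

/-- Clockwise rotation of a triangulation. -/
def rotTri (n : ℕ) (T : Finset (Sym2 (ZMod n))) : Finset (Sym2 (ZMod n)) :=
  T.image (rotDiag n)

/-- Inverse rotation of a triangulation. -/
def rotInvTri (n : ℕ) (T : Finset (Sym2 (ZMod n))) : Finset (Sym2 (ZMod n)) :=
  T.image (rotInvDiag n)

/-- The rotation orbit of a triangulation. -/
def rotOrbit (n : ℕ) (T : Finset (Sym2 (ZMod n))) : Set (Finset (Sym2 (ZMod n))) :=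
  {S | ∃ k : ℕ, S = (rotTri n)^[k] T}

/-- The type of triangulations of the convex `n`-gon. -/
abbrev Triangulation (n : ℕ) : Type := {T : Finset (Sym2 (ZMod n)) // IsTriangulation n T}

/-- The Kneser graph of triangulations of the convex `n`-gon: two triangulations
are adjacent iff they are distinct and share no diagonal. -/
def KGTri (n : ℕ) : SimpleGraph (Triangulation n) where
  Adj T T' := T ≠ T' ∧ Disjoint T.1 T'.1
  symm := ⟨fun T T' h => ⟨h.1.symm, h.2.symm⟩⟩
  loopless := ⟨fun T h => h.1 rfl⟩

noncomputable instance (n : ℕ) [NeZero n] : Fintype (Triangulation n) :=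
  Fintype.ofFinite _

/-!
Rotating a diagonal `{i, j}` gives `{i + 1, j + 1}`, which crosses it: `i + 1` lies strictly
inside the arc from `i` to `j`, and `j + 1` inside the arc from `j` to `i`. Hence a triangulation
shares no diagonal with its rotation, and since the rotation acts injectively on diagonals, the
same holds for `r^i T` and `r^(i+1) T`. As `r^n = id`, `T` is a periodic point of `r`, whose
orbit consists of the first `minimalPeriod r T` iterates, all distinct.
-/

open Function

theorem Function.ncard_range_iterate_eq_minimalPeriod {α : Type*} {f : α → α} {x : α}
    (hx : x ∈ periodicPts f) : (Set.range fun k => f^[k] x).ncard = minimalPeriod f x := by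
  have hrange : (Set.range fun k => f^[k] x) = (f^[·] x) '' Set.Iio (minimalPeriod f x) := by
    ext y
    constructor
    · rintro ⟨k, rfl⟩
      exact ⟨k % minimalPeriod f x, Nat.mod_lt _ (minimalPeriod_pos_of_mem_periodicPts hx),
        iterate_mod_minimalPeriod_eq⟩
    · rintro ⟨k, -, rfl⟩
      exact ⟨k, rfl⟩
  rw [hrange, iterate_injOn_Iio_minimalPeriod.ncard_image, Set.ncard_Iio_nat]

lemma ZMod.one_lt_val {n : ℕ} (hn : 1 < n) {x : ZMod n} (h0 : x ≠ 0) (h1 : x ≠ 1) :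
    1 < x.val := by
  have hpos : 0 < x.val := ZMod.val_pos.2 h0
  have hne : x.val ≠ 1 := mt (ZMod.val_eq_one hn x).1 h1
  omega

lemma ngonBtw_add_one {n : ℕ} (hn : 1 < n) {a b : ZMod n} (h0 : b - a ≠ 0) (h1 : b - a ≠ 1) :
    NgonBtw n a (a + 1) b := by
  have : Fact (1 < n) := ⟨hn⟩
  rw [NgonBtw, add_sub_cancel_left, ZMod.val_one]
  exact ⟨Nat.one_pos, ZMod.one_lt_val hn h0 h1⟩

lemma ngonCross_rotDiag_self {n : ℕ} (hn : 1 < n) {e : Sym2 (ZMod n)} (he : IsDiagonal n e) :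
    NgonCross n e (rotDiag n e) := by
  obtain ⟨i, j, rfl, h0, h1, h2⟩ := he
  have h0' : j - i ≠ 0 := by rwa [← neg_sub, neg_ne_zero] at h0
  have h1' : j - i ≠ 1 := by rwa [← neg_sub, neg_inj.ne] at h2
  exact ⟨i, j, i + 1, j + 1, rfl, rfl, ngonBtw_add_one hn h0' h1', ngonBtw_add_one hn h0 h1⟩

lemma disjoint_rotTri {n : ℕ} (hn : 1 < n) {T : Finset (Sym2 (ZMod n))}
    (hT : IsTriangulation n T) : Disjoint T (rotTri n T) := by
  rw [Finset.disjoint_right]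
  rintro _ hd hdT
  obtain ⟨e, he, rfl⟩ := Finset.mem_image.mp hd
  exact hT.2.2 e he _ hdT (ngonCross_rotDiag_self hn (hT.2.1 e he))

lemma rotDiag_injective (n : ℕ) : Injective (rotDiag n) :=
  Sym2.map.injective (add_left_injective 1)

lemma rotDiag_iterate_apply (n k : ℕ) (e : Sym2 (ZMod n)) :
    (rotDiag n)^[k] e = e.map (· + (k : ZMod n)) := by
  induction k with
  | zero => simp
  | succ k ih =>
    rw [iterate_succ_apply', ih, rotDiag, Sym2.map_map]
    congr 1
    funext x
    simp only [comp_apply]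
    push_cast
    ring

lemma rotTri_iterate_eq_image (n k : ℕ) (T : Finset (Sym2 (ZMod n))) :
    (rotTri n)^[k] T = T.image (rotDiag n)^[k] :=
  Finset.iterate_image (rotDiag n) k

lemma isPeriodicPt_rotTri (n : ℕ) (T : Finset (Sym2 (ZMod n))) :
    IsPeriodicPt (rotTri n) n T := by
  have : (rotDiag n)^[n] = id := by
    funext e
    simp [rotDiag_iterate_apply]
  rw [IsPeriodicPt, IsFixedPt, rotTri_iterate_eq_image, this, Finset.image_id]

lemma disjoint_rotTri_iterate_succ {n : ℕ} (hn : 1 < n) {T : Finset (Sym2 (ZMod n))}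
    (hT : IsTriangulation n T) (i : ℕ) :
    Disjoint ((rotTri n)^[i] T) ((rotTri n)^[i + 1] T) := by
  rw [iterate_succ_apply, rotTri_iterate_eq_image, rotTri_iterate_eq_image]
  exact (Finset.disjoint_image ((rotDiag_injective n).iterate i)).2 (disjoint_rotTri hn hT)

lemma ncard_rotOrbit {n : ℕ} [NeZero n] (T : Finset (Sym2 (ZMod n))) :
    (rotOrbit n T).ncard = minimalPeriod (rotTri n) T := by
  have hT : T ∈ periodicPts (rotTri n) :=
    mk_mem_periodicPts (Nat.pos_of_neZero n) (isPeriodicPt_rotTri n T)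
  rw [← ncard_range_iterate_eq_minimalPeriod hT]
  congr 1
  ext S
  simp [rotOrbit, eq_comm]

theorem rotation_orbit_induces_cycle_general (n : ℕ) (hn : 4 ≤ n)
    (T : Finset (Sym2 (ZMod n))) (hT : IsTriangulation n T) :
    (∀ i j : ℕ, i < j → j < (rotOrbit n T).ncard →
        (rotTri n)^[i] T ≠ (rotTri n)^[j] T) ∧
    (∀ i : ℕ, i < (rotOrbit n T).ncard →
        Disjoint ((rotTri n)^[i] T)
          ((rotTri n)^[(i + 1) % (rotOrbit n T).ncard] T)) := by
  have : NeZero n := ⟨by omega⟩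
  rw [ncard_rotOrbit]
  refine ⟨fun i j hij hj h => hij.ne (iterate_injOn_Iio_minimalPeriod (hij.trans hj) hj h),
    fun i _ => ?_⟩
  rw [iterate_mod_minimalPeriod_eq]
  exact disjoint_rotTri_iterate_succ (by omega) hT i

/-- If a rotation orbit `O` of triangulations of the `n`-gon has size at least `3`
(in particular, whenever `n ≥ 7`), then for `T ∈ O` the sequence
`T, r(T), …, r^{|O|-1}(T), T` is a cycle in the Kneser graph: the listed
triangulations are pairwise distinct, and cyclically consecutive ones are disjoint. -/
theorem rotation_orbit_induces_cycle (n : ℕ) (hn : 4 ≤ n)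
    (T : Finset (Sym2 (ZMod n))) (hT : IsTriangulation n T)
    (hO : 3 ≤ (rotOrbit n T).ncard ∨ 7 ≤ n) :
    (∀ i j : ℕ, i < j → j < (rotOrbit n T).ncard →
        (rotTri n)^[i] T ≠ (rotTri n)^[j] T) ∧
    (∀ i : ℕ, i < (rotOrbit n T).ncard →
        Disjoint ((rotTri n)^[i] T)
          ((rotTri n)^[(i + 1) % (rotOrbit n T).ncard] T)) :=
  rotation_orbit_induces_cycle_general n hn T hT
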